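/- arXiv:2212.06990 — 4 statements merged into one kernel-verified Lean document; each statement's English description precedes it below -/
import Mathlib

section
/- Let Φ be an (m+p)×(m+p) matrix over K = RatFunc ℂ, partitioned into blocks Φ11 (m×m), Φ12 (m×p), Φ21 (p×m), Φ22 (p×p), and let W be an (m+p)×m matrix over K, partitioned as W = [W1; W2] with W1 an m×m block, such that W1 is invertible over K and Φ = W W*. Then Φ11 = W1 W1* is invertible over K and W2 = H W1, where H := Φ21 Φ11⁻¹. Moreover this relation does not depend on the choice of factor: if V = [V1; V2] is any other (m+p)×m matrix over K with V1 invertible and V V* = Φ, then V2 V1⁻¹ = W2 W1⁻¹ = H. (Theorem 2.1 of the paper: the deterministic relation inside a tall spectral factor.) -/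
open Matrix

noncomputable section

abbrev K : Type := RatFunc ℂ

/-- `W*`: the transpose of the entrywise application of `σ`. -/
def paraStar {I J : Type} (σ : K →+* K) (W : Matrix I J K) : Matrix J I K := (W.map σ)ᵀ

/-!
Writing `Φ = W W*` blockwise gives `Φ11 = W1 W1*` and `Φ21 = W2 W1*`. Since `σ` is a ring
homomorphism, `det W1* = σ (det W1)` is a unit, hence so is `det Φ11`, and
`Φ21 Φ11⁻¹ = W2 W1* (W1*)⁻¹ W1⁻¹ = W2 W1⁻¹`. The left side depends only on `Φ`, so every
factor with invertible upper block yields the same `H`.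
-/

theorem Matrix.mul_mul_inv_mul_of_isUnit_det {R : Type*} [CommRing R] {l n : Type*}
    [Fintype n] [DecidableEq n] (C : Matrix l n R) (A B : Matrix n n R) (hB : IsUnit B.det) :
    C * B * (A * B)⁻¹ = C * A⁻¹ := by
  rw [Matrix.mul_inv_rev, Matrix.mul_assoc, ← Matrix.mul_assoc B, Matrix.mul_nonsing_inv _ hB,
    Matrix.one_mul]

lemma paraStar_fromRows {I₁ I₂ J : Type} (σ : K →+* K) (A : Matrix I₁ J K) (B : Matrix I₂ J K) :
    paraStar σ (fromRows A B) = fromCols (paraStar σ A) (paraStar σ B) := by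
  ext i (j | j) <;> rfl

lemma det_paraStar {n : Type} [Fintype n] [DecidableEq n] (σ : K →+* K) (A : Matrix n n K) :
    (paraStar σ A).det = σ A.det := by
  rw [paraStar, det_transpose, RingHom.map_det]
  rfl

lemma isUnit_det_paraStar {n : Type} [Fintype n] [DecidableEq n] (σ : K →+* K)
    {A : Matrix n n K} (hA : IsUnit A.det) : IsUnit (paraStar σ A).det := by
  rw [det_paraStar]
  exact hA.map σ

section Factorization

variable {m p : Type} [Fintype m] (σ : K →+* K)
  {Φ11 : Matrix m m K} {Φ12 : Matrix m p K} {Φ21 : Matrix p m K} {Φ22 : Matrix p p K}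
  {W1 : Matrix m m K} {W2 : Matrix p m K}

lemma blocks_eq_of_fromBlocks_eq_mul_paraStar
    (hFac : fromBlocks Φ11 Φ12 Φ21 Φ22 = fromRows W1 W2 * paraStar σ (fromRows W1 W2)) :
    Φ11 = W1 * paraStar σ W1 ∧ Φ21 = W2 * paraStar σ W1 := by
  rw [paraStar_fromRows, fromRows_mul_fromCols] at hFac
  exact ⟨congrArg toBlocks₁₁ hFac, congrArg toBlocks₂₁ hFac⟩

lemma isUnit_det_of_fromBlocks_eq_mul_paraStar [DecidableEq m] (hW1 : IsUnit W1.det)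
    (hFac : fromBlocks Φ11 Φ12 Φ21 Φ22 = fromRows W1 W2 * paraStar σ (fromRows W1 W2)) :
    IsUnit Φ11.det := by
  rw [(blocks_eq_of_fromBlocks_eq_mul_paraStar σ hFac).1, det_mul]
  exact hW1.mul (isUnit_det_paraStar σ hW1)

lemma mul_inv_eq_of_fromBlocks_eq_mul_paraStar [DecidableEq m] (hW1 : IsUnit W1.det)
    (hFac : fromBlocks Φ11 Φ12 Φ21 Φ22 = fromRows W1 W2 * paraStar σ (fromRows W1 W2)) :
    Φ21 * Φ11⁻¹ = W2 * W1⁻¹ := by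
  obtain ⟨h11, h21⟩ := blocks_eq_of_fromBlocks_eq_mul_paraStar σ hFac
  rw [h11, h21, Matrix.mul_mul_inv_mul_of_isUnit_det _ _ _ (isUnit_det_paraStar σ hW1)]

end Factorization

theorem deterministic_relation_general (m p : ℕ)
    (σ : K →+* K)
    (Φ11 : Matrix (Fin m) (Fin m) K) (Φ12 : Matrix (Fin m) (Fin p) K)
    (Φ21 : Matrix (Fin p) (Fin m) K) (Φ22 : Matrix (Fin p) (Fin p) K)
    (W1 : Matrix (Fin m) (Fin m) K) (W2 : Matrix (Fin p) (Fin m) K)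
    (hW1 : IsUnit W1.det)
    (hFac : Matrix.fromBlocks Φ11 Φ12 Φ21 Φ22
      = (Matrix.fromRows W1 W2) * paraStar σ (Matrix.fromRows W1 W2)) :
    Φ11 = W1 * paraStar σ W1 ∧ IsUnit Φ11.det ∧
    W2 = (Φ21 * Φ11⁻¹) * W1 ∧
    ∀ (V1 : Matrix (Fin m) (Fin m) K) (V2 : Matrix (Fin p) (Fin m) K),
      IsUnit V1.det →
      Matrix.fromBlocks Φ11 Φ12 Φ21 Φ22
        = (Matrix.fromRows V1 V2) * paraStar σ (Matrix.fromRows V1 V2) →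
      V2 * V1⁻¹ = W2 * W1⁻¹ ∧ W2 * W1⁻¹ = Φ21 * Φ11⁻¹ := by
  have hH := mul_inv_eq_of_fromBlocks_eq_mul_paraStar σ hW1 hFac
  refine ⟨(blocks_eq_of_fromBlocks_eq_mul_paraStar σ hFac).1,
    isUnit_det_of_fromBlocks_eq_mul_paraStar σ hW1 hFac, ?_, fun V1 V2 hV1 hVFac => ?_⟩
  · rw [hH, Matrix.mul_assoc, Matrix.nonsing_inv_mul _ hW1, Matrix.mul_one]
  · exact ⟨(mul_inv_eq_of_fromBlocks_eq_mul_paraStar σ hV1 hVFac).symm.trans hH, hH.symm⟩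

theorem deterministic_relation (m p : ℕ)
    (σ : K →+* K)
    (hσC : ∀ c : ℂ, σ (RatFunc.C c) = RatFunc.C ((starRingEnd ℂ) c))
    (hσX : σ RatFunc.X = RatFunc.X⁻¹)
    (Φ11 : Matrix (Fin m) (Fin m) K) (Φ12 : Matrix (Fin m) (Fin p) K)
    (Φ21 : Matrix (Fin p) (Fin m) K) (Φ22 : Matrix (Fin p) (Fin p) K)
    (W1 : Matrix (Fin m) (Fin m) K) (W2 : Matrix (Fin p) (Fin m) K)
    (hW1 : IsUnit W1.det)
    (hFac : Matrix.fromBlocks Φ11 Φ12 Φ21 Φ22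
      = (Matrix.fromRows W1 W2) * paraStar σ (Matrix.fromRows W1 W2)) :
    Φ11 = W1 * paraStar σ W1 ∧ IsUnit Φ11.det ∧
    W2 = (Φ21 * Φ11⁻¹) * W1 ∧
    ∀ (V1 : Matrix (Fin m) (Fin m) K) (V2 : Matrix (Fin p) (Fin m) K),
      IsUnit V1.det →
      Matrix.fromBlocks Φ11 Φ12 Φ21 Φ22
        = (Matrix.fromRows V1 V2) * paraStar σ (Matrix.fromRows V1 V2) →
      V2 * V1⁻¹ = W2 * W1⁻¹ ∧ W2 * W1⁻¹ = Φ21 * Φ11⁻¹ :=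
  deterministic_relation_general m p σ Φ11 Φ12 Φ21 Φ22 W1 W2 hW1 hFac
end
end

section
/- Let Q be an m×m matrix over K = RatFunc ℂ such that Q Q* = 1 (the identity matrix over K). If every entry of Q is proper and every pole α of Q satisfies |α| < 1, and every entry of Q⁻¹ (= Q*) is proper and every pole α of Q⁻¹ satisfies |α| ≤ 1, then Q is a constant matrix: there is a unitary matrix U ∈ M_m(ℂ) with Q = U mapped into K entrywise via RatFunc.C. (Key step in the proof of the paper's Lemma 2.3: an inner rational matrix that is also minimum-phase is a constant unitary matrix.) -/
open Matrix

noncomputable section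

/-- `α` is a pole of `q`: a root of the denominator of `q` in lowest terms. -/
def IsPole (α : ℂ) (q : K) : Prop := Polynomial.eval α (RatFunc.denom q) = 0

/-- `α` is a pole of a matrix if it is a pole of some entry. -/
def MIsPole {I J : Type} (α : ℂ) (W : Matrix I J K) : Prop := ∃ i j, IsPole α (W i j)

/-- `q` is proper: `0` is not a pole of `τ q` (where `τ` maps `X` to `X⁻¹`). -/
def Proper (τ : K →+* K) (q : K) : Prop := ¬ IsPole 0 (τ q)

/-! Work entrywise. An entry `q` of `Q` is proper with poles in the open unit disc, and
`σ q`, an entry of `Q⁻¹ = Q*`, is proper with poles in the closed unit disc. Since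
`(σ q)(z) = conj (q (1 / conj z))`, a pole `α ≠ 0` of `q` gives the pole `1 / conj α` of `σ q`,
outside the closed disc, while a pole at `0` makes `σ q` improper. So `q` is a polynomial, and a
proper polynomial is constant. The constant matrix `U` with `Q = U` then satisfies `U Uᴴ = 1`. -/

open Polynomial

theorem Polynomial.eval_inv_reflect_mul_pow {F : Type*} [Field F] {p : F[X]} {N : ℕ}
    (hp : p.natDegree ≤ N) {x : F} (hx : x ≠ 0) : (reflect N p).eval x⁻¹ * x ^ N = p.eval x := by
  let : Invertible x := invertibleOfNonzero hx
  simpa only [eval₂_id, invOf_eq_inv] using eval₂_reflect_mul_pow (RingHom.id F) x N p hp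

namespace RatFunc

variable {F : Type*} [Field F]

theorem eval_denom_eq_zero_of_eq_div {q : RatFunc F} {p r : F[X]} (hr : r ≠ 0)
    (hq : q = algebraMap F[X] (RatFunc F) p / algebraMap F[X] (RatFunc F) r) {x : F}
    (hrx : r.eval x = 0) (hpx : p.eval x ≠ 0) : q.denom.eval x = 0 := by
  have h := congrArg (Polynomial.eval x) ((num_mul_eq_mul_denom_iff hr).mpr hq)
  rw [Polynomial.eval_mul, Polynomial.eval_mul, hrx, mul_zero] at h
  exact (mul_eq_zero.mp h.symm).resolve_left hpx

theorem eval_num_ne_zero_of_eval_denom_eq_zero (q : RatFunc F) {x : F}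
    (hx : q.denom.eval x = 0) : q.num.eval x ≠ 0 := by
  intro hnx
  obtain ⟨a, b, hab⟩ := q.isCoprime_num_denom
  simpa [hx, hnx] using congrArg (Polynomial.eval x) hab

theorem denom_eq_one_of_forall_eval_ne_zero [IsAlgClosed F] (q : RatFunc F)
    (h : ∀ x, q.denom.eval x ≠ 0) : q.denom = 1 := by
  refine q.monic_denom.natDegree_eq_zero.mp (by_contra fun hd => ?_)
  obtain ⟨x, hx⟩ := IsAlgClosed.exists_root q.denom <| by
    rw [degree_eq_natDegree q.denom_ne_zero]
    exact_mod_cast hd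
  exact h x hx

theorem eq_algebraMap_num_of_denom_eq_one {q : RatFunc F} (h : q.denom = 1) :
    q = algebraMap F[X] (RatFunc F) q.num := by
  conv_lhs => rw [← q.num_div_denom, h]
  simp

theorem map_algebraMap_eq_eval₂ (ρ : RatFunc F →+* RatFunc F) (f : F →+* F)
    (hC : ∀ c, ρ (C c) = C (f c)) (p : F[X]) :
    ρ (algebraMap F[X] (RatFunc F) p) = (p.map f).eval₂ C (ρ X) := by
  rw [← aeval_X_left_eq_algebraMap, aeval_def, hom_eval₂, eval₂_map, algebraMap_eq_C]
  congr 1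
  exact RingHom.ext hC

theorem map_algebraMap_of_map_X (ρ : RatFunc F →+* RatFunc F) (f : F →+* F)
    (hC : ∀ c, ρ (C c) = C (f c)) (hX : ρ X = X) (p : F[X]) :
    ρ (algebraMap F[X] (RatFunc F) p) = algebraMap F[X] (RatFunc F) (p.map f) := by
  rw [map_algebraMap_eq_eval₂ ρ f hC, hX, ← aeval_X_left_eq_algebraMap, aeval_def, algebraMap_eq_C]

theorem map_algebraMap_of_map_X_eq_inv (ρ : RatFunc F →+* RatFunc F) (f : F →+* F)
    (hC : ∀ c, ρ (C c) = C (f c)) (hX : ρ X = X⁻¹) {N : ℕ} {p : F[X]} (hp : p.natDegree ≤ N) :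
    ρ (algebraMap F[X] (RatFunc F) p)
      = algebraMap F[X] (RatFunc F) (reflect N (p.map f)) / X ^ N := by
  let : Invertible (X⁻¹ : RatFunc F) := invertibleOfNonzero (inv_ne_zero X_ne_zero)
  have h := eval₂_reflect_mul_pow C (X⁻¹ : RatFunc F) N (p.map f) (natDegree_map_le.trans hp)
  rw [invOf_eq_inv, inv_inv, ← algebraMap_eq_C, ← aeval_def, aeval_X_left_eq_algebraMap] at h
  rw [map_algebraMap_eq_eval₂ ρ f hC, hX, ← algebraMap_eq_C, ← h, inv_pow, div_eq_mul_inv]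

theorem map_eq_div_of_map_X (ρ : RatFunc F →+* RatFunc F) (f : F →+* F)
    (hC : ∀ c, ρ (C c) = C (f c)) (hX : ρ X = X) (q : RatFunc F) :
    ρ q = algebraMap F[X] (RatFunc F) (q.num.map f)
      / algebraMap F[X] (RatFunc F) (q.denom.map f) := by
  conv_lhs => rw [← q.num_div_denom]
  rw [map_div₀, map_algebraMap_of_map_X ρ f hC hX, map_algebraMap_of_map_X ρ f hC hX]

theorem map_eq_div_reflect_of_map_X_eq_inv (ρ : RatFunc F →+* RatFunc F) (f : F →+* F)
    (hC : ∀ c, ρ (C c) = C (f c)) (hX : ρ X = X⁻¹) {q : RatFunc F} {N : ℕ}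
    (hnum : q.num.natDegree ≤ N) (hdenom : q.denom.natDegree ≤ N) :
    ρ q = algebraMap F[X] (RatFunc F) (reflect N (q.num.map f))
      / algebraMap F[X] (RatFunc F) (reflect N (q.denom.map f)) := by
  conv_lhs => rw [← q.num_div_denom]
  rw [map_div₀, map_algebraMap_of_map_X_eq_inv ρ f hC hX hnum,
    map_algebraMap_of_map_X_eq_inv ρ f hC hX hdenom,
    div_div_div_cancel_right₀ (pow_ne_zero _ X_ne_zero)]

end RatFunc

theorem not_isPole_zero_of_proper_map (σ : K →+* K)
    (hσC : ∀ c : ℂ, σ (RatFunc.C c) = RatFunc.C ((starRingEnd ℂ) c))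
    (hσX : σ RatFunc.X = RatFunc.X⁻¹) (τ : K →+* K)
    (hτC : ∀ c : ℂ, τ (RatFunc.C c) = RatFunc.C c) (hτX : τ RatFunc.X = RatFunc.X⁻¹)
    {q : K} (hσq : Proper τ (σ q)) : ¬ IsPole 0 q := by
  intro h0
  have hC : ∀ c, (τ.comp σ) (RatFunc.C c) = RatFunc.C ((starRingEnd ℂ) c) := by
    simp [hσC, hτC]
  have hX : (τ.comp σ) RatFunc.X = RatFunc.X := by simp [hσX, hτX]
  refine hσq (RatFunc.eval_denom_eq_zero_of_eq_div (Polynomial.map_ne_zero q.denom_ne_zero)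
    (RatFunc.map_eq_div_of_map_X _ _ hC hX q) ?_ ?_)
  · rw [← map_zero (starRingEnd ℂ), eval_map_apply, h0, map_zero]
  · rw [← map_zero (starRingEnd ℂ), eval_map_apply]
    exact (RingHom.injective _).ne (q.eval_num_ne_zero_of_eval_denom_eq_zero h0)

theorem isPole_inv_conj_of_isPole (σ : K →+* K)
    (hσC : ∀ c : ℂ, σ (RatFunc.C c) = RatFunc.C ((starRingEnd ℂ) c))
    (hσX : σ RatFunc.X = RatFunc.X⁻¹) {q : K} {α : ℂ} (hα : IsPole α q) (hα0 : α ≠ 0) :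
    IsPole ((starRingEnd ℂ) α)⁻¹ (σ q) := by
  set N := max q.num.natDegree q.denom.natDegree
  have hα0' : (starRingEnd ℂ) α ≠ 0 := (_root_.map_ne_zero _).mpr hα0
  have eval_reflect (p : ℂ[X]) (hp : p.natDegree ≤ N) :
      (reflect N (p.map (starRingEnd ℂ))).eval ((starRingEnd ℂ) α)⁻¹
        = (starRingEnd ℂ) (p.eval α) / (starRingEnd ℂ) α ^ N := by
    rw [eq_div_iff (pow_ne_zero _ hα0'), ← eval_map_apply,
      eval_inv_reflect_mul_pow (natDegree_map_le.trans hp) hα0']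
  refine RatFunc.eval_denom_eq_zero_of_eq_div ?_
    (RatFunc.map_eq_div_reflect_of_map_X_eq_inv σ _ hσC hσX le_sup_left le_sup_right) ?_ ?_
  · exact (reflect_eq_zero_iff.not).mpr (Polynomial.map_ne_zero q.denom_ne_zero)
  · rw [eval_reflect _ le_sup_right, hα, map_zero, zero_div]
  · rw [eval_reflect _ le_sup_left]
    exact div_ne_zero ((_root_.map_ne_zero _).mpr (q.eval_num_ne_zero_of_eval_denom_eq_zero hα))
      (pow_ne_zero _ hα0')

theorem natDegree_eq_zero_of_proper_algebraMap (τ : K →+* K)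
    (hτC : ∀ c : ℂ, τ (RatFunc.C c) = RatFunc.C c) (hτX : τ RatFunc.X = RatFunc.X⁻¹)
    {p : ℂ[X]} (hp : Proper τ (algebraMap ℂ[X] K p)) : p.natDegree = 0 := by
  by_contra hN
  have hτp : τ (algebraMap ℂ[X] K p)
      = algebraMap ℂ[X] K (reflect p.natDegree p) / algebraMap ℂ[X] K (X ^ p.natDegree) := by
    rw [RatFunc.map_algebraMap_of_map_X_eq_inv τ (RingHom.id ℂ) hτC hτX le_rfl, Polynomial.map_id,
      map_pow, RatFunc.algebraMap_X]
  refine hp (RatFunc.eval_denom_eq_zero_of_eq_div (pow_ne_zero _ X_ne_zero) hτp ?_ ?_)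
  · rw [eval_pow, eval_X, zero_pow hN]
  · rw [← coeff_zero_eq_eval_zero, coeff_reflect, revAt_le (Nat.zero_le _), Nat.sub_zero]
    exact leadingCoeff_ne_zero.mpr (ne_zero_of_natDegree_gt (Nat.pos_of_ne_zero hN))

theorem exists_eq_C_of_proper_of_poles (σ : K →+* K)
    (hσC : ∀ c : ℂ, σ (RatFunc.C c) = RatFunc.C ((starRingEnd ℂ) c))
    (hσX : σ RatFunc.X = RatFunc.X⁻¹) (τ : K →+* K)
    (hτC : ∀ c : ℂ, τ (RatFunc.C c) = RatFunc.C c) (hτX : τ RatFunc.X = RatFunc.X⁻¹)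
    {q : K} (hq : Proper τ q) (hqpole : ∀ α, IsPole α q → ‖α‖ < 1)
    (hσq : Proper τ (σ q)) (hσqpole : ∀ β, IsPole β (σ q) → ‖β‖ ≤ 1) :
    ∃ c, q = RatFunc.C c := by
  have hnopole (α : ℂ) : ¬ IsPole α q := by
    intro hα
    rcases eq_or_ne α 0 with rfl | hα0
    · exact not_isPole_zero_of_proper_map σ hσC hσX τ hτC hτX hσq hα
    · have hinv := hσqpole _ (isPole_inv_conj_of_isPole σ hσC hσX hα hα0)
      rw [norm_inv, Complex.norm_conj, inv_le_one₀ (norm_pos_iff.mpr hα0)] at hinv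
      exact (hqpole α hα).not_ge hinv
  have hqnum := RatFunc.eq_algebraMap_num_of_denom_eq_one
    (q.denom_eq_one_of_forall_eval_ne_zero hnopole)
  have hdeg := natDegree_eq_zero_of_proper_algebraMap τ hτC hτX (hqnum ▸ hq)
  refine ⟨q.num.coeff 0, hqnum.trans ?_⟩
  conv_lhs => rw [eq_C_of_natDegree_eq_zero hdeg]
  exact RatFunc.algebraMap_C _

theorem paraStar_map_C {I J : Type} (σ : K →+* K)
    (hσC : ∀ c : ℂ, σ (RatFunc.C c) = RatFunc.C ((starRingEnd ℂ) c)) (U : Matrix I J ℂ) :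
    paraStar σ (U.map RatFunc.C) = Uᴴ.map RatFunc.C := by
  ext i j
  exact hσC (U j i)

theorem mul_conjTranspose_eq_one_of_mul_paraStar {I : Type} [Fintype I] [DecidableEq I]
    (σ : K →+* K) (hσC : ∀ c : ℂ, σ (RatFunc.C c) = RatFunc.C ((starRingEnd ℂ) c))
    {U : Matrix I I ℂ} (h : U.map RatFunc.C * paraStar σ (U.map RatFunc.C) = 1) :
    U * Uᴴ = 1 := by
  apply Matrix.map_injective (RatFunc.C : ℂ →+* K).injective
  dsimp only
  rw [Matrix.map_mul, ← paraStar_map_C σ hσC, h, Matrix.map_one _ (map_zero _) (map_one _)]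

theorem inner_minimum_phase_is_constant_unitary (m : ℕ)
    (σ : K →+* K)
    (hσC : ∀ c : ℂ, σ (RatFunc.C c) = RatFunc.C ((starRingEnd ℂ) c))
    (hσX : σ RatFunc.X = RatFunc.X⁻¹)
    (τ : K →+* K)
    (hτC : ∀ c : ℂ, τ (RatFunc.C c) = RatFunc.C c)
    (hτX : τ RatFunc.X = RatFunc.X⁻¹)
    (Q : Matrix (Fin m) (Fin m) K)
    (hinner : Q * paraStar σ Q = 1)
    (hQprop : ∀ i j, Proper τ (Q i j))
    (hQpole : ∀ α : ℂ, MIsPole α Q → ‖α‖ < 1)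
    (hQinvprop : ∀ i j, Proper τ (Q⁻¹ i j))
    (hQinvpole : ∀ α : ℂ, MIsPole α Q⁻¹ → ‖α‖ ≤ 1) :
    ∃ U : Matrix (Fin m) (Fin m) ℂ,
      Uᴴ * U = 1 ∧ U * Uᴴ = 1 ∧ Q = U.map (fun c : ℂ => (RatFunc.C c : K)) := by
  have hQinv (i j) : Q⁻¹ j i = σ (Q i j) := by rw [inv_eq_right_inv hinner]; rfl
  have hentry (i j) : ∃ c, Q i j = RatFunc.C c :=
    exists_eq_C_of_proper_of_poles σ hσC hσX τ hτC hτX (hQprop i j)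
      (fun α hα => hQpole α ⟨i, j, hα⟩) (hQinv i j ▸ hQinvprop j i)
      (fun β hβ => hQinvpole β ⟨j, i, hQinv i j ▸ hβ⟩)
  choose U hU using hentry
  have hQU : Q = (of U).map RatFunc.C := ext hU
  have hUU := mul_conjTranspose_eq_one_of_mul_paraStar σ hσC (hQU ▸ hinner)
  exact ⟨of U, mul_eq_one_comm.mp hUU, hUU, hQU⟩
end
end

section
/- Let Q be an m×m matrix over K = RatFunc ℂ with Q Q* = 1, every entry of Q proper, and every pole α of Q satisfying |α| < 1 (Q is a stable inner matrix). If Q is not a constant matrix (i.e. not of the form RatFunc.C applied entrywise to a complex matrix), then Q has a non-minimum-phase zero: either there exist α ∈ ℂ with |α| > 1 and a nonzero vector v ∈ ℂᵐ such that Q(α) v = 0, or the value matrix Q(∞) has rank strictly less than m. (A nonconstant stable inner rational matrix has a zero outside the closed unit disc or at infinity.) -/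
/-!
Some entry of `Q` is not constant; being proper, it must have a finite pole `α`, and `|α| < 1`.
Writing `σ = τ ∘ conjCoeff`, the corresponding entry of `Q*` has a pole at `ᾱ⁻¹`, where `Q` is
regular. Since `Q Q* = 1` and the rational functions regular at a point form a ring in which
every element with nonzero value there is a unit, `det Q(ᾱ⁻¹) ≠ 0` would make `Q* = Q⁻¹` regular
at `ᾱ⁻¹`; hence `Q(ᾱ⁻¹)` is singular. If `α = 0` the same argument, applied to
`τ Q · τ Q* = 1` at `0` (where `τ Q* = conjCoeff Qᵀ` has a pole), shows that `Q(∞)` is singular.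
-/

open Matrix

noncomputable section

/-- Evaluation of a rational function at a point. -/
def evalAt (α : ℂ) (q : K) : ℂ := RatFunc.eval (RingHom.id ℂ) α q

/-- Entrywise evaluation of a matrix of rational functions. -/
def MEval {I J : Type} (α : ℂ) (W : Matrix I J K) : Matrix I J ℂ := W.map (evalAt α)

open Polynomial

theorem RatFunc.ringHom_ext {F L : Type*} [CommRing F] [IsDomain F] [Semiring L]
    {f g : RatFunc F →+* L} (hC : ∀ c, f (RatFunc.C c) = g (RatFunc.C c))
    (hX : f RatFunc.X = g RatFunc.X) : f = g :=
  IsLocalization.ringHom_ext (nonZeroDivisors F[X]) <| Polynomial.ringHom_ext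
    (by simpa only [RingHom.comp_apply, RatFunc.algebraMap_C] using hC)
    (by simpa only [RingHom.comp_apply, RatFunc.algebraMap_X] using hX)

theorem isPole_div {β : ℂ} {p r : ℂ[X]} (hr0 : r ≠ 0) (hr : r.eval β = 0) (hp : p.eval β ≠ 0) :
    IsPole β (algebraMap ℂ[X] K p / algebraMap ℂ[X] K r) := by
  have h := congrArg (eval β) ((RatFunc.num_mul_eq_mul_denom_iff hr0).mpr rfl :
    (algebraMap ℂ[X] K p / algebraMap ℂ[X] K r).num * r = p * _)
  rw [eval_mul, eval_mul, hr, mul_zero, eq_comm, mul_eq_zero] at h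
  exact h.resolve_left hp

theorem not_isPole_of_denom_dvd {β : ℂ} {q : K} {r : ℂ[X]} (hdvd : q.denom ∣ r)
    (hr : r.eval β ≠ 0) : ¬ IsPole β q :=
  fun h => hr (eval_eq_zero_of_dvd_of_eval_eq_zero hdvd h)

theorem not_isPole_div {β : ℂ} {p r : ℂ[X]} (hr : r.eval β ≠ 0) :
    ¬ IsPole β (algebraMap ℂ[X] K p / algebraMap ℂ[X] K r) :=
  not_isPole_of_denom_dvd (RatFunc.denom_div_dvd p r) hr

def regularAt (β : ℂ) : Subring K where
  carrier := {q | ¬ IsPole β q}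
  one_mem' := by simp [IsPole, RatFunc.denom_one]
  zero_mem' := by simp [IsPole, RatFunc.denom_zero]
  mul_mem' {a b} ha hb := not_isPole_of_denom_dvd (RatFunc.denom_mul_dvd a b)
    (by rw [eval_mul]; exact mul_ne_zero ha hb)
  add_mem' {a b} ha hb := not_isPole_of_denom_dvd (RatFunc.denom_add_dvd a b)
    (by rw [eval_mul]; exact mul_ne_zero ha hb)
  neg_mem' {q} hq := by
    rw [Set.mem_ofPred_eq, ← RatFunc.num_div_denom q, ← neg_div, ← map_neg]
    exact not_isPole_div hq

def evalAtHom (β : ℂ) : regularAt β →+* ℂ where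
  toFun q := evalAt β q
  map_one' := RatFunc.eval_one _ _
  map_zero' := RatFunc.eval_zero _ _
  map_mul' a b := RatFunc.eval_mul _ _ a.2 b.2
  map_add' a b := RatFunc.eval_add _ _ a.2 b.2

theorem evalAtHom_apply {β : ℂ} (q : regularAt β) : evalAtHom β q = evalAt β q := rfl

theorem isUnit_of_evalAtHom_ne_zero {β : ℂ} {q : regularAt β} (hq : evalAtHom β q ≠ 0) :
    IsUnit q := by
  have hq0 : (q : K) ≠ 0 := fun h => hq (by rw [evalAtHom_apply, h, evalAt, RatFunc.eval_zero])
  have hnum : q.1.num.eval β ≠ 0 := fun h => hq (by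
    rw [evalAtHom_apply, evalAt, RatFunc.eval, eval₂_id, h, zero_div])
  exact IsUnit.of_mul_eq_one ⟨_, not_isPole_of_denom_dvd (RatFunc.denom_inv_dvd hq0) hnum⟩
    (Subtype.ext (mul_inv_cancel₀ hq0))

theorem det_MEval_eq_zero_of_isPole {n : Type} [Fintype n] [DecidableEq n] {β : ℂ}
    {A B : Matrix n n K} (hAB : A * B = 1) (hA : ∀ i j, ¬ IsPole β (A i j)) {i j : n}
    (hB : IsPole β (B i j)) : (MEval β A).det = 0 := by
  by_contra hdet
  set A' : Matrix n n (regularAt β) := fun i j => ⟨A i j, hA i j⟩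
  have hA' : (regularAt β).subtype.mapMatrix A' = A := rfl
  have hunit : IsUnit A'.det := isUnit_of_evalAtHom_ne_zero <| by
    rwa [RingHom.map_det]
  have hB' : B = (regularAt β).subtype.mapMatrix A'⁻¹ := by
    rw [← Matrix.inv_eq_right_inv hAB, ← hA']
    exact Matrix.inv_eq_right_inv (by rw [← map_mul, Matrix.mul_nonsing_inv _ hunit, map_one])
  exact (A'⁻¹ i j).2 (by rwa [hB'] at hB)

theorem Matrix.rank_lt_card_of_det_eq_zero {n F : Type*} [Fintype n] [DecidableEq n] [Field F]
    {M : Matrix n n F} (h : M.det = 0) : M.rank < Fintype.card n := by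
  refine M.rank_le_card_width.lt_of_ne fun hr => ?_
  have hcols : LinearIndependent F M.col := by
    rw [linearIndependent_iff_card_eq_finrank_span, ← hr, Matrix.rank_eq_finrank_span_cols,
      Set.finrank]
  exact (Matrix.isUnit_iff_isUnit_det M).mp (Matrix.linearIndependent_cols_iff_isUnit.mp hcols)
    |>.ne_zero h

theorem tau_tau {τ : K →+* K} (hτC : ∀ c : ℂ, τ (RatFunc.C c) = RatFunc.C c)
    (hτX : τ RatFunc.X = RatFunc.X⁻¹) (q : K) : τ (τ q) = q :=
  RingHom.congr_fun (f := τ.comp τ) (g := RingHom.id K)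
    (RatFunc.ringHom_ext (by simp [hτC]) (by simp [hτX])) q

theorem tau_algebraMap {τ : K →+* K} (hτC : ∀ c : ℂ, τ (RatFunc.C c) = RatFunc.C c)
    (hτX : τ RatFunc.X = RatFunc.X⁻¹) (p : ℂ[X]) :
    τ (algebraMap ℂ[X] K p) =
      algebraMap ℂ[X] K p.reverse / algebraMap ℂ[X] K (X ^ p.natDegree) := by
  have hX : (RatFunc.X : K) ≠ 0 := RatFunc.X_ne_zero
  let : Invertible (RatFunc.X⁻¹ : K) := invertibleOfNonzero (inv_ne_zero hX)
  have h := eval₂_reverse_mul_pow RatFunc.C (RatFunc.X⁻¹ : K) p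
  rw [invOf_eq_inv, inv_inv] at h
  have halg : ∀ r : ℂ[X], algebraMap ℂ[X] K r = r.eval₂ RatFunc.C RatFunc.X := fun r => by
    rw [← RatFunc.aeval_X_left_eq_algebraMap, aeval_def, RatFunc.algebraMap_eq_C]
  have hτC' : τ.comp RatFunc.C = RatFunc.C := RingHom.ext hτC
  rw [map_pow, RatFunc.algebraMap_X, halg, halg, hom_eval₂, hτX, hτC',
    eq_div_iff (pow_ne_zero _ hX), ← h, inv_pow, inv_mul_cancel_right₀ (pow_ne_zero _ hX)]

theorem tau_not_isPole_inv {τ : K →+* K} (hτC : ∀ c : ℂ, τ (RatFunc.C c) = RatFunc.C c)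
    (hτX : τ RatFunc.X = RatFunc.X⁻¹) {α : ℂ} (hα : α ≠ 0) {q : K} (hq : ¬ IsPole α q) :
    ¬ IsPole α⁻¹ (τ q) := by
  let : Invertible α := invertibleOfNonzero hα
  have hrev : q.denom.reverse.eval α⁻¹ ≠ 0 := by
    rw [← invOf_eq_inv, ← eval₂_id, Ne, eval₂_reverse_eq_zero_iff, eval₂_id]
    exact hq
  have hτq : τ q = algebraMap ℂ[X] K (q.num.reverse * X ^ q.denom.natDegree) /
      algebraMap ℂ[X] K (q.denom.reverse * X ^ q.num.natDegree) := by
    conv_lhs => rw [← RatFunc.num_div_denom q, map_div₀, tau_algebraMap hτC hτX,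
      tau_algebraMap hτC hτX]
    rw [div_div_div_eq, map_mul, map_mul, mul_comm (algebraMap ℂ[X] K (X ^ _))]
  rw [hτq]
  refine not_isPole_div ?_
  rw [eval_mul, eval_pow, eval_X]
  exact mul_ne_zero hrev (pow_ne_zero _ (inv_ne_zero hα))

theorem tau_isPole_inv {τ : K →+* K} (hτC : ∀ c : ℂ, τ (RatFunc.C c) = RatFunc.C c)
    (hτX : τ RatFunc.X = RatFunc.X⁻¹) {α : ℂ} (hα : α ≠ 0) {q : K} (hq : IsPole α q) :
    IsPole α⁻¹ (τ q) := by
  by_contra h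
  exact tau_not_isPole_inv hτC hτX (inv_ne_zero hα) h (by rwa [inv_inv, tau_tau hτC hτX])

def conjCoeff : K →+* K :=
  RatFunc.mapRingHom (mapRingHom (starRingEnd ℂ))
    (nonZeroDivisors_le_comap_nonZeroDivisors_of_injective _
      (map_injective _ (starRingEnd ℂ).injective))

theorem conjCoeff_div (p r : ℂ[X]) :
    conjCoeff (algebraMap ℂ[X] K p / algebraMap ℂ[X] K r) =
      algebraMap ℂ[X] K (p.map (starRingEnd ℂ)) / algebraMap ℂ[X] K (r.map (starRingEnd ℂ)) := by
  simp only [conjCoeff, RatFunc.coe_mapRingHom_eq_coe_map, RatFunc.map_apply_div, coe_mapRingHom]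

theorem conjCoeff_C (c : ℂ) : conjCoeff (RatFunc.C c) = RatFunc.C (starRingEnd ℂ c) := by
  simpa [RatFunc.algebraMap_C] using conjCoeff_div (Polynomial.C c) 1

theorem conjCoeff_X : conjCoeff RatFunc.X = RatFunc.X := by
  simpa [RatFunc.algebraMap_X] using conjCoeff_div X 1

theorem conjCoeff_conjCoeff (q : K) : conjCoeff (conjCoeff q) = q :=
  RingHom.congr_fun (f := conjCoeff.comp conjCoeff) (g := RingHom.id K)
    (RatFunc.ringHom_ext (by simp [conjCoeff_C]) (by simp [conjCoeff_X])) q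

theorem conjCoeff_not_isPole {α : ℂ} {q : K} (hq : ¬ IsPole α q) :
    ¬ IsPole (starRingEnd ℂ α) (conjCoeff q) := by
  rw [← RatFunc.num_div_denom q, conjCoeff_div]
  refine not_isPole_div ?_
  rwa [eval_map, eval₂_at_apply, _root_.map_ne_zero]

theorem conjCoeff_isPole {α : ℂ} {q : K} (hq : IsPole α q) :
    IsPole (starRingEnd ℂ α) (conjCoeff q) := by
  by_contra h
  exact conjCoeff_not_isPole h (by rwa [Complex.conj_conj, conjCoeff_conjCoeff])

theorem sigma_eq_tau_comp_conjCoeff {σ τ : K →+* K}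
    (hσC : ∀ c : ℂ, σ (RatFunc.C c) = RatFunc.C ((starRingEnd ℂ) c))
    (hσX : σ RatFunc.X = RatFunc.X⁻¹) (hτC : ∀ c : ℂ, τ (RatFunc.C c) = RatFunc.C c)
    (hτX : τ RatFunc.X = RatFunc.X⁻¹) : σ = τ.comp conjCoeff :=
  RatFunc.ringHom_ext (by simp [hσC, hτC, conjCoeff_C]) (by simp [hσX, hτX, conjCoeff_X])

theorem exists_isPole_of_proper {τ : K →+* K} (hτC : ∀ c : ℂ, τ (RatFunc.C c) = RatFunc.C c)
    (hτX : τ RatFunc.X = RatFunc.X⁻¹) {q : K} (hq : Proper τ q)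
    (hnc : ∀ c : ℂ, q ≠ RatFunc.C c) : ∃ α : ℂ, IsPole α q := by
  by_contra! hreg
  have hden : q.denom = 1 := (RatFunc.monic_denom q).natDegree_eq_zero.mp <| by
    by_contra hn
    obtain ⟨α, hα⟩ := IsAlgClosed.exists_root q.denom <| by
      rw [degree_eq_natDegree (RatFunc.denom_ne_zero q)]
      exact_mod_cast hn
    exact hreg α hα
  have hpoly : algebraMap ℂ[X] K q.num = q := by
    conv_rhs => rw [← RatFunc.num_div_denom q, hden, map_one, div_one]
  by_cases hn : q.num.natDegree = 0
  · refine hnc (q.num.coeff 0) ?_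
    conv_lhs => rw [← hpoly, eq_C_of_natDegree_eq_zero hn, RatFunc.algebraMap_C]
  · refine hq ?_
    have hnum : q.num ≠ 0 := fun h => hn (by rw [h, natDegree_zero])
    rw [← hpoly, tau_algebraMap hτC hτX]
    refine isPole_div (pow_ne_zero _ X_ne_zero) (by simp [hn]) ?_
    rwa [← coeff_zero_eq_eval_zero, coeff_zero_reverse, leadingCoeff_ne_zero]

theorem nonconstant_stable_inner_has_unstable_zero (m : ℕ)
    (σ : K →+* K)
    (hσC : ∀ c : ℂ, σ (RatFunc.C c) = RatFunc.C ((starRingEnd ℂ) c))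
    (hσX : σ RatFunc.X = RatFunc.X⁻¹)
    (τ : K →+* K)
    (hτC : ∀ c : ℂ, τ (RatFunc.C c) = RatFunc.C c)
    (hτX : τ RatFunc.X = RatFunc.X⁻¹)
    (Q : Matrix (Fin m) (Fin m) K)
    (hinner : Q * paraStar σ Q = 1)
    (hQprop : ∀ i j, Proper τ (Q i j))
    (hQpole : ∀ α : ℂ, MIsPole α Q → ‖α‖ < 1)
    (hnonconst : ¬ ∃ U : Matrix (Fin m) (Fin m) ℂ,
      Q = U.map (fun c : ℂ => (RatFunc.C c : K))) :
    (∃ α : ℂ, 1 < ‖α‖ ∧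
      ∃ v : Fin m → ℂ, v ≠ 0 ∧ (MEval α Q).mulVec v = 0) ∨
    (MEval 0 (Q.map τ)).rank < m := by
  have hσ := sigma_eq_tau_comp_conjCoeff hσC hσX hτC hτX
  obtain ⟨i, j, hij⟩ : ∃ i j, ∀ c : ℂ, Q i j ≠ RatFunc.C c := by
    by_contra! h
    choose U hU using h
    exact hnonconst ⟨U, Matrix.ext hU⟩
  obtain ⟨α, hα⟩ := exists_isPole_of_proper hτC hτX (hQprop i j) hij
  rcases eq_or_ne α 0 with rfl | hα0
  · right
    have hinner' : Q.map τ * (paraStar σ Q).map τ = 1 := by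
      simpa using congrArg τ.mapMatrix hinner
    have hpole : IsPole 0 ((paraStar σ Q).map τ j i) := by
      simpa [paraStar, hσ, tau_tau hτC hτX] using conjCoeff_isPole hα
    simpa using rank_lt_card_of_det_eq_zero
      (det_MEval_eq_zero_of_isPole hinner' hQprop hpole)
  · left
    have hβ : 1 < ‖(starRingEnd ℂ α)⁻¹‖ := by
      rw [norm_inv, Complex.norm_conj]
      exact one_lt_inv₀ (norm_pos_iff.mpr hα0) |>.mpr (hQpole α ⟨i, j, hα⟩)
    have hpole : IsPole (starRingEnd ℂ α)⁻¹ (paraStar σ Q j i) := by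
      simpa [paraStar, hσ] using tau_isPole_inv hτC hτX (by simpa using hα0) (conjCoeff_isPole hα)
    exact ⟨_, hβ, Matrix.exists_mulVec_eq_zero_iff.mpr <| det_MEval_eq_zero_of_isPole hinner
      (fun i j h => (hQpole _ ⟨i, j, h⟩).not_gt hβ) hpole⟩
end
end

section
/- Let A, C ∈ M_n(ℂ) and B, D ∈ M_p(ℂ) be such that both matrix pencils are regular, i.e. the polynomial λ ↦ det(A − λ C) is not identically zero and the polynomial λ ↦ det(D − λ B) is not identically zero. Then the linear map X ↦ A X Bᵀ + C X Dᵀ on n×p complex matrices is bijective (equivalently, the Sylvester-type equation A X Bᵀ + C X Dᵀ = E has a unique solution X for every E) if and only if for every nonzero pair (α, β) ∈ ℂ² with det(β A − α C) = 0 and every nonzero pair (γ, δ) ∈ ℂ² with det(δ D − γ B) = 0, one has α δ + β γ ≠ 0. (Theorem C.1 of the paper, in homogeneous-coordinate form: unique solvability of a Sylvester-type equation holds iff the pencils are regular and the spectrum of one pencil is disjoint from the negative of the spectrum of the other, where generalized eigenvalues, including infinite ones, are encoded projectively by nonzero pairs.) -/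
/-!
A generalized eigenvector `x` of `(A, C)` at `(α : β)` and `y` of `(D, B)` at `(γ : δ)` with
`αδ + βγ = 0` give the nonzero solution `x yᵀ` of `A X Bᵀ + C X Dᵀ = 0`.

Conversely, regularity provides `s` with `P = A - sC` and `Q = D + sB` invertible, and
`A X Bᵀ + C X Dᵀ = P X Bᵀ + C X Qᵀ`. A solution of the homogeneous equation therefore satisfies
`(P⁻¹ C) X = X (-Bᵀ Qᵀ⁻¹)`, so by Sylvester's theorem `X = 0` unless the two matrices share an
eigenvalue `r`. Such an `r` makes `(rs + 1 : r)` an eigenvalue of `(A, C)` and `(-(rs + 1) : r)`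
one of `(D, B)`, and for this pair `αδ + βγ = 0`.
-/

open Matrix

namespace Matrix

open Polynomial

variable {K R m n : Type*} [Fintype m] [Fintype n]

def pencilSylvester [CommRing R] (A C : Matrix m m R) (B D : Matrix n n R) :
    Matrix m n R →ₗ[R] Matrix m n R where
  toFun X := A * X * Bᵀ + C * X * Dᵀ
  map_add' X Y := by simp only [Matrix.mul_add, Matrix.add_mul]; abel
  map_smul' c X := by simp only [Matrix.mul_smul, Matrix.smul_mul, smul_add, RingHom.id_apply]

section CommRing

variable [CommRing R]

theorem pencilSylvester_apply (A C : Matrix m m R) (B D : Matrix n n R) (X : Matrix m n R) :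
    pencilSylvester A C B D X = A * X * Bᵀ + C * X * Dᵀ := rfl

theorem pencilSylvester_vecMulVec (A C : Matrix m m R) (B D : Matrix n n R) (x : m → R)
    (y : n → R) :
    pencilSylvester A C B D (vecMulVec x y) =
      vecMulVec (A *ᵥ x) (B *ᵥ y) + vecMulVec (C *ᵥ x) (D *ᵥ y) := by
  simp only [pencilSylvester_apply, mul_vecMulVec, vecMulVec_mul, vecMul_transpose]

theorem pencilSylvester_apply_eq_sub_smul_add_smul (A C : Matrix m m R) (B D : Matrix n n R)
    (s : R) (X : Matrix m n R) :
    pencilSylvester A C B D X = (A - s • C) * X * Bᵀ + C * X * (D + s • B)ᵀ := by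
  simp only [pencilSylvester_apply, transpose_add, transpose_smul, Matrix.sub_mul,
    Matrix.smul_mul, Matrix.mul_add, Matrix.mul_smul]
  abel

variable [DecidableEq m] [DecidableEq n]

theorem aeval_mul_eq_mul_aeval {M : Matrix m m R} {N : Matrix n n R} {X : Matrix m n R}
    (hX : M * X = X * N) (f : R[X]) : aeval M f * X = X * aeval N f := by
  have hpow (k : ℕ) : M ^ k * X = X * N ^ k := by
    induction k with
    | zero => simp
    | succ k ih =>
      rw [pow_succ, pow_succ, Matrix.mul_assoc, hX, ← Matrix.mul_assoc, ih, Matrix.mul_assoc]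
  induction f using Polynomial.induction_on' with
  | add f g hf hg => rw [map_add, map_add, Matrix.add_mul, Matrix.mul_add, hf, hg]
  | monomial k a =>
    simp only [aeval_monomial, Algebra.algebraMap_eq_smul_one, Matrix.smul_mul, one_mul]
    rw [hpow, Matrix.mul_smul]

/-- Sylvester: `aeval M M.charpoly = 0` annihilates `X` from the left, while coprimality makes
`aeval N M.charpoly` invertible. -/
theorem eq_zero_of_mul_eq_mul_of_isCoprime_charpoly {M : Matrix m m R} {N : Matrix n n R}
    {X : Matrix m n R} (hX : M * X = X * N) (hMN : IsCoprime M.charpoly N.charpoly) :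
    X = 0 := by
  obtain ⟨a, b, hab⟩ := hMN
  calc X = X * aeval N (M.charpoly * a + b * N.charpoly) := by
        rw [mul_comm M.charpoly, hab, map_one, Matrix.mul_one]
    _ = aeval M M.charpoly * X * aeval N a := by
      rw [map_add, map_mul, map_mul, aeval_self_charpoly N, Matrix.mul_zero, add_zero,
        ← Matrix.mul_assoc, ← aeval_mul_eq_mul_aeval hX]
    _ = 0 := by rw [aeval_self_charpoly, Matrix.zero_mul, Matrix.zero_mul]

theorem eval_det_map_sub_X_smul_map (A C : Matrix m m R) (r : R) :
    ((A.map Polynomial.C - (X : R[X]) • C.map Polynomial.C).det).eval r = (A - r • C).det := by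
  rw [← coe_evalRingHom, RingHom.map_det]
  congr 1
  ext i j
  simp only [RingHom.mapMatrix_apply, map_apply, sub_apply, smul_apply, smul_eq_mul,
    coe_evalRingHom, eval_sub, eval_mul, eval_C, eval_X]

end CommRing

section Field

variable [Field K]

theorem vecMulVec_add_vecMulVec_eq_zero {u v : m → K} {w z : n → K} {α β γ δ : K}
    (hαβ : (α, β) ≠ (0, 0)) (huv : β • u = α • v) (hγδ : (γ, δ) ≠ (0, 0))
    (hwz : δ • z = γ • w) (hsum : α * δ + β * γ = 0) :
    vecMulVec u w + vecMulVec v z = 0 := by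
  by_cases hβ : β = 0
  · have hα : α ≠ 0 := by rintro rfl; exact hαβ (by rw [hβ])
    have hδ : δ = 0 := by simpa [hβ, hα] using hsum
    have hγ : γ ≠ 0 := by rintro rfl; exact hγδ (by rw [hδ])
    have hv : v = 0 := by simpa [hβ, hα] using huv.symm
    have hw : w = 0 := by simpa [hδ, hγ] using hwz.symm
    ext i j
    simp [vecMulVec_apply, hv, hw]
  · have hδ : δ ≠ 0 := by
      rintro rfl
      have hγ : γ = 0 := by simpa [hβ] using hsum
      exact hγδ (by rw [hγ])
    refine (smul_right_injective _ (mul_ne_zero hβ hδ)).eq_iff.mp ?_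
    calc (β * δ) • (vecMulVec u w + vecMulVec v z)
        = δ • vecMulVec (β • u) w + β • vecMulVec v (δ • z) := by
          rw [smul_vecMulVec, vecMulVec_smul, smul_add, smul_smul, smul_smul, mul_comm δ]
      _ = (α * δ + β * γ) • vecMulVec v w := by
          rw [huv, hwz, smul_vecMulVec, vecMulVec_smul, smul_smul, smul_smul, add_smul,
            mul_comm δ]
      _ = (β * δ) • 0 := by rw [hsum, zero_smul, smul_zero]

variable [DecidableEq m] [DecidableEq n]

theorem not_injective_pencilSylvester {A C : Matrix m m K} {B D : Matrix n n K} {α β γ δ : K}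
    (hαβ : (α, β) ≠ (0, 0)) (hAC : (β • A - α • C).det = 0) (hγδ : (γ, δ) ≠ (0, 0))
    (hDB : (δ • D - γ • B).det = 0) (hsum : α * δ + β * γ = 0) :
    ¬ Function.Injective (pencilSylvester A C B D) := by
  obtain ⟨x, hx0, hx⟩ := exists_mulVec_eq_zero_iff.mpr hAC
  obtain ⟨y, hy0, hy⟩ := exists_mulVec_eq_zero_iff.mpr hDB
  rw [sub_mulVec, smul_mulVec, smul_mulVec, sub_eq_zero] at hx hy
  obtain ⟨i, hxi⟩ := Function.ne_iff.mp hx0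
  obtain ⟨j, hyj⟩ := Function.ne_iff.mp hy0
  rw [injective_iff_map_eq_zero]
  intro hinj
  refine mul_ne_zero hxi hyj (congrFun (congrFun (hinj (vecMulVec x y) ?_) i) j)
  rw [pencilSylvester_vecMulVec]
  exact vecMulVec_add_vecMulVec_eq_zero hαβ hx hγδ hy hsum

theorem mul_eq_mul_of_mul_mul_add_mul_mul_eq_zero {P C : Matrix m m K} {B Q : Matrix n n K}
    {X : Matrix m n K} (hP : IsUnit P.det) (hQ : IsUnit Q.det) (hX : P * X * B + C * X * Q = 0) :
    P⁻¹ * C * X = X * (-B * Q⁻¹) := by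
  calc P⁻¹ * C * X = P⁻¹ * (C * X * Q) * Q⁻¹ := by
        rw [Matrix.mul_assoc, Matrix.mul_assoc, mul_nonsing_inv_cancel_right _ _ hQ]
    _ = P⁻¹ * (P * (X * -B)) * Q⁻¹ := by
        rw [eq_neg_of_add_eq_zero_right hX]
        simp only [Matrix.mul_neg, Matrix.neg_mul, Matrix.mul_assoc]
    _ = X * (-B * Q⁻¹) := by rw [nonsing_inv_mul_cancel_left _ _ hP, Matrix.mul_assoc]

theorem det_smul_sub_eq_zero_of_isRoot_charpoly {P C : Matrix m m K} (hP : IsUnit P.det) {r : K}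
    (hr : (P⁻¹ * C).charpoly.IsRoot r) : (r • P - C).det = 0 := by
  have hfactor : r • P - C = P * (scalar m r - P⁻¹ * C) := by
    rw [Matrix.mul_sub, mul_nonsing_inv_cancel_left _ _ hP, scalar_apply, ← smul_one_eq_diagonal,
      Matrix.mul_smul, Matrix.mul_one]
  rw [hfactor, det_mul, ← eval_charpoly, hr.eq_zero, mul_zero]

theorem finite_setOf_det_sub_smul_eq_zero {A C : Matrix m m K}
    (hAC : ∃ l : K, (A - l • C).det ≠ 0) : {l : K | (A - l • C).det = 0}.Finite := by
  obtain ⟨l, hl⟩ := hAC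
  have hne : (A.map Polynomial.C - (X : K[X]) • C.map Polynomial.C).det ≠ 0 := by
    intro h
    exact hl (by rw [← eval_det_map_sub_X_smul_map, h, eval_zero])
  refine (finite_setOfPred_isRoot hne).subset fun r hr => ?_
  simpa [IsRoot, eval_det_map_sub_X_smul_map] using hr

theorem exists_det_sub_smul_ne_zero_and_det_add_smul_ne_zero [Infinite K] {A C : Matrix m m K}
    {B D : Matrix n n K} (hAC : ∃ l : K, (A - l • C).det ≠ 0) (hDB : ∃ l : K, (D - l • B).det ≠ 0) :
    ∃ s : K, (A - s • C).det ≠ 0 ∧ (D + s • B).det ≠ 0 := by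
  have hDB' : ∃ l : K, (D - l • -B).det ≠ 0 := by
    obtain ⟨l, hl⟩ := hDB
    exact ⟨-l, by rwa [smul_neg, neg_smul, neg_neg]⟩
  obtain ⟨s, hs⟩ := ((finite_setOf_det_sub_smul_eq_zero hAC).union
    (finite_setOf_det_sub_smul_eq_zero hDB')).exists_notMem
  simp only [Set.mem_union, Set.mem_ofPred_eq, not_or, smul_neg, sub_neg_eq_add] at hs
  exact ⟨s, hs⟩

theorem injective_pencilSylvester [IsAlgClosed K] {A C : Matrix m m K} {B D : Matrix n n K}
    {s : K} (hP : (A - s • C).det ≠ 0) (hQ : (D + s • B).det ≠ 0)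
    (hspec : ∀ α β γ δ : K, (α, β) ≠ (0, 0) → (β • A - α • C).det = 0 →
      (γ, δ) ≠ (0, 0) → (δ • D - γ • B).det = 0 → α * δ + β * γ ≠ 0) :
    Function.Injective (pencilSylvester A C B D) := by
  have hPu : IsUnit (A - s • C).det := hP.isUnit
  have hQu : IsUnit (D + s • B)ᵀ.det := by rw [det_transpose]; exact hQ.isUnit
  refine (injective_iff_map_eq_zero _).mpr fun X hX => ?_
  rw [pencilSylvester_apply_eq_sub_smul_add_smul A C B D s] at hX
  refine eq_zero_of_mul_eq_mul_of_isCoprime_charpoly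
    (mul_eq_mul_of_mul_mul_add_mul_mul_eq_zero hPu hQu hX) ?_
  rw [isCoprime_iff_aeval_ne_zero_of_isAlgClosed (k := K) K]
  intro r
  by_contra! hr
  have hAC : (r • A - (r * s + 1) • C).det = 0 := by
    rw [← det_smul_sub_eq_zero_of_isRoot_charpoly hPu hr.1]
    congr 1
    module
  have hDB : (r • D - (-(r * s + 1)) • B).det = 0 := by
    have hroot : ((D + s • B)ᵀ⁻¹ * -Bᵀ).charpoly.IsRoot r := by
      rw [charpoly_mul_comm]; exact hr.2
    rw [← det_transpose, ← det_smul_sub_eq_zero_of_isRoot_charpoly hQu hroot]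
    congr 1
    simp only [transpose_sub, transpose_add, transpose_smul]
    module
  have hpair {c : K} (hc : c ≠ 0) : (c * (r * s + 1), r) ≠ (0, 0) := by
    intro h
    obtain ⟨h, rfl⟩ := Prod.mk.inj h
    simp [hc] at h
  exact hspec _ r _ r (by simpa using hpair one_ne_zero) hAC
    (by simpa using hpair (neg_ne_zero.mpr one_ne_zero)) hDB (by ring)

end Field

end Matrix

theorem sylvester_unique_solvability (n p : ℕ)
    (A C : Matrix (Fin n) (Fin n) ℂ)
    (B D : Matrix (Fin p) (Fin p) ℂ)
    (hRegA : ∃ lam : ℂ, (A - lam • C).det ≠ 0)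
    (hRegB : ∃ lam : ℂ, (D - lam • B).det ≠ 0) :
    Function.Bijective
        (fun X : Matrix (Fin n) (Fin p) ℂ => A * X * Bᵀ + C * X * Dᵀ)
    ↔ ∀ α β γ δ : ℂ, (α, β) ≠ (0, 0) → (β • A - α • C).det = 0 →
        (γ, δ) ≠ (0, 0) → (δ • D - γ • B).det = 0 →
        α * δ + β * γ ≠ 0 := by
  change Function.Bijective (pencilSylvester A C B D) ↔ _
  constructor
  · intro hbij α β γ δ hαβ hAC hγδ hDB hsum
    exact not_injective_pencilSylvester hαβ hAC hγδ hDB hsum hbij.injective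
  · intro hspec
    obtain ⟨s, hP, hQ⟩ := exists_det_sub_smul_ne_zero_and_det_add_smul_ne_zero hRegA hRegB
    have hinj := injective_pencilSylvester hP hQ hspec
    exact ⟨hinj, LinearMap.injective_iff_surjective.mp hinj⟩
end
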